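/- Fix 0 < x < y ≤ 1 and assume r₂(x, y) ≠ 1. Then the partial derivative ∂h^F/∂x (x, y) has the same sign as (ξ'(y) − ξ'(x))² − ξ''(x)ξ''(y)(y−x)²; that is, ∂h^F/∂x (x,y) is positive, zero, or negative exactly when (ξ'(y)−ξ'(x))² − ξ''(x)ξ''(y)(y−x)² is positive, zero, or negative respectively. -/

import Mathlib

noncomputable section

/-- The mixed p-spin function `ξ(x) = Σ_j λ_j x^{p_j}`. -/
def xiF (n : ℕ) (p : Fin n → ℕ) (lam : Fin n → ℝ) : ℝ → ℝ :=
  fun x => ∑ j, lam j * x ^ p j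

/-- `h(x,y,z)`. -/
def hfun (ξ : ℝ → ℝ) (x y z : ℝ) : ℝ :=
  ξ y - ξ x - deriv ξ x * (y - x) +
    (deriv ξ y - deriv ξ x) * (y - x) * (1 / (z - 1) - z / (z - 1) ^ 2 * Real.log z)

/-- `r₂(x,y)`. -/
def r2f (ξ : ℝ → ℝ) (x y : ℝ) : ℝ :=
  deriv (deriv ξ) y * (y - x) / (deriv ξ y - deriv ξ x)

/-!
Write `h^F(u, y) = ξ(y) - ξ(u) - ξ'(u)(y - u) + A(u)(y - u) G(r₂(u, y))` with
`A(u) = ξ'(y) - ξ'(u)` and `G(z) = 1/(z - 1) - z log z/(z - 1)²`. Differentiating in `u` and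
eliminating `ξ''(y)` through `ξ''(y)(y - x) = z A` (where `z = r₂(x, y)`) gives
`∂ₓh^F = (A - ξ''(x)(y - x) z) K(z)` with `K = -(z G)' = (z² - 1 - 2 z log z)/(z - 1)³`, while
`(ξ'(y) - ξ'(x))² - ξ''(x)ξ''(y)(y - x)² = A (A - ξ''(x)(y - x) z)`. Both `A` and `K(z)` are
positive: `ξ'` is increasing, and `z² - 1 - 2 z log z` vanishes at `1` and is strictly increasing,
with derivative `2(z - 1 - log z)`.
-/

open Real Set

def hCorr (z : ℝ) : ℝ := 1 / (z - 1) - z / (z - 1) ^ 2 * log z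

def hCorrFactor (z : ℝ) : ℝ := (z ^ 2 - 1 - 2 * z * log z) / (z - 1) ^ 3

lemma hasDerivAt_hCorr {z : ℝ} (hz : z ≠ 0) (hz1 : z ≠ 1) :
    HasDerivAt hCorr (((z + 1) * log z - 2 * (z - 1)) / (z - 1) ^ 3) z := by
  have hz1' : z - 1 ≠ 0 := sub_ne_zero.2 hz1
  have hsub := (hasDerivAt_id' z).sub_const 1
  have h := ((hasDerivAt_const z 1).fun_div hsub hz1').sub
    (((hasDerivAt_id' z).fun_div (hsub.fun_pow 2) (pow_ne_zero 2 hz1')).mul (hasDerivAt_log hz))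
  refine h.congr_deriv ?_
  field_simp; ring

lemma strictMonoOn_sq_sub_one_sub_two_mul_log :
    StrictMonoOn (fun s : ℝ => s ^ 2 - 1 - 2 * s * log s) (Ioi 0) := by
  have hderiv : ∀ t : ℝ, 0 < t → HasDerivAt (fun s : ℝ => s ^ 2 - 1 - 2 * s * log s)
      (2 * (t - 1 - log t)) t := fun t ht =>
    (((hasDerivAt_pow 2 t).sub_const 1).sub
      (((hasDerivAt_id' t).const_mul 2).mul (hasDerivAt_log ht.ne'))).congr_deriv
      (by field_simp; ring)
  have hmono : ∀ {D : Set ℝ}, Convex ℝ D → D ⊆ Ioi 0 → interior D ⊆ {1}ᶜ →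
      StrictMonoOn (fun s : ℝ => s ^ 2 - 1 - 2 * s * log s) D := fun hD hs0 hs1 =>
    strictMonoOn_of_deriv_pos hD (fun t ht => (hderiv t (hs0 ht)).continuousAt.continuousWithinAt)
      fun t ht => by
        have ht0 : 0 < t := hs0 (interior_subset ht)
        rw [(hderiv t ht0).deriv]
        linarith [log_lt_sub_one_of_pos ht0 (hs1 ht)]
  have h := (hmono (convex_Ioc 0 1) Ioc_subset_Ioi_self (by simp)).union
    (hmono (convex_Ici 1) (Ici_subset_Ioi.2 one_pos) (by simp))
    (isGreatest_Ioc one_pos) isLeast_Ici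
  rwa [Ioc_union_Ici_eq_Ioi zero_lt_one] at h

lemma hCorrFactor_pos {z : ℝ} (hz : 0 < z) (hz1 : z ≠ 1) : 0 < hCorrFactor z := by
  have hf := strictMonoOn_sq_sub_one_sub_two_mul_log
  have h1 : (1 : ℝ) ∈ Ioi 0 := by norm_num
  rcases hz1.lt_or_gt with h | h
  · have := hf hz h1 h
    refine div_pos_of_neg_of_neg ?_ (Odd.pow_neg (by decide) (by linarith))
    simpa using this
  · have := hf h1 hz h
    exact div_pos (by simpa using this) (by positivity)

lemma hfun_eq_hCorr (ξ : ℝ → ℝ) (x y z : ℝ) :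
    hfun ξ x y z = ξ y - ξ x - deriv ξ x * (y - x) + (deriv ξ y - deriv ξ x) * (y - x) * hCorr z :=
  rfl

section
variable {ξ : ℝ → ℝ} {x y : ℝ}

lemma hasDerivAt_r2f_left (hξ' : DifferentiableAt ℝ (deriv ξ) x)
    (hA : deriv ξ y - deriv ξ x ≠ 0) :
    HasDerivAt (fun u => r2f ξ u y)
      (deriv (deriv ξ) y * (deriv (deriv ξ) x * (y - x) - (deriv ξ y - deriv ξ x)) /
        (deriv ξ y - deriv ξ x) ^ 2) x :=
  (((hasDerivAt_id' x).const_sub y).const_mul _ |>.fun_div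
    (hξ'.hasDerivAt.const_sub _) hA).congr_deriv (by ring)

theorem hasDerivAt_hfun_r2f (hξ : DifferentiableAt ℝ ξ x)
    (hξ' : DifferentiableAt ℝ (deriv ξ) x) (hA : deriv ξ y - deriv ξ x ≠ 0)
    (hz : r2f ξ x y ≠ 0) (hz1 : r2f ξ x y ≠ 1) :
    HasDerivAt (fun u => hfun ξ u y (r2f ξ u y))
      ((deriv ξ y - deriv ξ x - deriv (deriv ξ) x * (y - x) * r2f ξ x y) *
        hCorrFactor (r2f ξ x y)) x := by
  have hyu := (hasDerivAt_id' x).const_sub y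
  have h := (((hξ.hasDerivAt.const_sub (ξ y)).fun_sub (hξ'.hasDerivAt.fun_mul hyu)).fun_add
    (((hξ'.hasDerivAt.const_sub (deriv ξ y)).fun_mul hyu).fun_mul
      ((hasDerivAt_hCorr hz hz1).comp x (hasDerivAt_r2f_left hξ' hA))))
  simp only [hfun_eq_hCorr]
  refine h.congr_deriv ?_
  have hD : y - x ≠ 0 := by rintro h; simp [r2f, h] at hz
  have hz1' : r2f ξ x y - 1 ≠ 0 := sub_ne_zero.2 hz1
  have hb : deriv (deriv ξ) y = r2f ξ x y * (deriv ξ y - deriv ξ x) / (y - x) := by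
    rw [r2f]; field_simp
  rw [Function.comp_apply, hb]
  generalize r2f ξ x y = z at *
  simp only [hCorr, hCorrFactor]
  field_simp
  ring
end

section
variable {n : ℕ} (p : Fin n → ℕ) (lam : Fin n → ℝ)

lemma hasDerivAt_xiF (t : ℝ) :
    HasDerivAt (xiF n p lam) (xiF n (fun j => p j - 1) (fun j => lam j * p j) t) t := by
  unfold xiF
  exact (HasDerivAt.fun_sum fun j _ => (hasDerivAt_pow (p j) t).const_mul (lam j)).congr_deriv
    (Finset.sum_congr rfl fun j _ => by ring)

lemma deriv_xiF : deriv (xiF n p lam) = xiF n (fun j => p j - 1) (fun j => lam j * p j) :=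
  funext fun t => (hasDerivAt_xiF p lam t).deriv

lemma differentiable_xiF : Differentiable ℝ (xiF n p lam) :=
  fun t => (hasDerivAt_xiF p lam t).differentiableAt

variable [Nonempty (Fin n)] {p lam}

lemma xiF_pos (hlam : ∀ j, 0 < lam j) {t : ℝ} (ht : 0 < t) : 0 < xiF n p lam t :=
  Finset.sum_pos (fun j _ => mul_pos (hlam j) (pow_pos ht _)) Finset.univ_nonempty

lemma xiF_lt_xiF (hlam : ∀ j, 0 < lam j) (hp : ∀ j, p j ≠ 0) {s t : ℝ} (hs : 0 ≤ s) (hst : s < t) :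
    xiF n p lam s < xiF n p lam t :=
  Finset.sum_lt_sum_of_nonempty Finset.univ_nonempty fun j _ =>
    mul_lt_mul_of_pos_left (pow_lt_pow_left₀ hst hs (hp j)) (hlam j)
end

lemma sign_mul_iff_of_pos {t a b : ℝ} (ha : 0 < a) (hb : 0 < b) :
    (0 < t * a ↔ 0 < t * b) ∧ (t * a = 0 ↔ t * b = 0) ∧ (t * a < 0 ↔ t * b < 0) := by
  simp only [mul_pos_iff_of_pos_right ha, mul_pos_iff_of_pos_right hb, mul_eq_zero, ha.ne', hb.ne',
    or_false, mul_neg_iff, ha, hb, ha.asymm, hb.asymm, and_true, and_false, false_or]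

theorem hF_partial_x_sign_general
    (n : ℕ) (hn : 1 ≤ n) (p : Fin n → ℕ) (hp2 : ∀ i, 2 < p i)
    (lam : Fin n → ℝ) (hlam : ∀ i, 0 < lam i)
    (x y : ℝ) (hx : 0 < x) (hxy : x < y)
    (hr : r2f (xiF n p lam) x y ≠ 1) :
    (0 < deriv (fun u => hfun (xiF n p lam) u y (r2f (xiF n p lam) u y)) x ↔
        0 < (deriv (xiF n p lam) y - deriv (xiF n p lam) x) ^ 2 -
          deriv (deriv (xiF n p lam)) x * deriv (deriv (xiF n p lam)) y * (y - x) ^ 2) ∧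
    (deriv (fun u => hfun (xiF n p lam) u y (r2f (xiF n p lam) u y)) x = 0 ↔
        (deriv (xiF n p lam) y - deriv (xiF n p lam) x) ^ 2 -
          deriv (deriv (xiF n p lam)) x * deriv (deriv (xiF n p lam)) y * (y - x) ^ 2 = 0) ∧
    (deriv (fun u => hfun (xiF n p lam) u y (r2f (xiF n p lam) u y)) x < 0 ↔
        (deriv (xiF n p lam) y - deriv (xiF n p lam) x) ^ 2 -
          deriv (deriv (xiF n p lam)) x * deriv (deriv (xiF n p lam)) y * (y - x) ^ 2 < 0) := by
  have : Nonempty (Fin n) := ⟨⟨0, hn⟩⟩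
  set ξ := xiF n p lam
  have hlam' : ∀ j, 0 < lam j * p j := fun j => mul_pos (hlam j) (by have := hp2 j; positivity)
  have hA : 0 < deriv ξ y - deriv ξ x := by
    rw [deriv_xiF, sub_pos]
    exact xiF_lt_xiF hlam' (fun j => by have := hp2 j; omega) hx.le hxy
  have hb : 0 < deriv (deriv ξ) y := by
    rw [deriv_xiF, deriv_xiF]
    exact xiF_pos (fun j => mul_pos (hlam' j) (by have := hp2 j; norm_cast; omega)) (hx.trans hxy)
  have hz : 0 < r2f ξ x y := div_pos (mul_pos hb (sub_pos.2 hxy)) hA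
  have hdisc : (deriv ξ y - deriv ξ x) ^ 2 - deriv (deriv ξ) x * deriv (deriv ξ) y * (y - x) ^ 2 =
      (deriv ξ y - deriv ξ x - deriv (deriv ξ) x * (y - x) * r2f ξ x y) *
        (deriv ξ y - deriv ξ x) := by
    rw [r2f]; field_simp
  have hξ' : DifferentiableAt ℝ (deriv ξ) x := by
    rw [deriv_xiF]; exact differentiable_xiF _ _ x
  rw [(hasDerivAt_hfun_r2f (differentiable_xiF p lam x) hξ' hA.ne' hz.ne' hr).deriv, hdisc]
  exact sign_mul_iff_of_pos (hCorrFactor_pos hz hr) hA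

/-- For `0 < x < y ≤ 1` with `r₂(x,y) ≠ 1`, the partial derivative
`∂h^F/∂x (x,y)`, where `h^F(x,y) = h(x, y, r₂(x,y))`, has the same sign as
`(ξ'(y) - ξ'(x))² - ξ''(x)ξ''(y)(y-x)²`. -/
theorem hF_partial_x_sign
    (n : ℕ) (hn : 1 ≤ n) (p : Fin n → ℕ) (hp2 : ∀ i, 2 < p i) (hpmono : StrictMono p)
    (lam : Fin n → ℝ) (hlam : ∀ i, 0 < lam i) (hlamsum : ∑ i, lam i = 1)
    (x y : ℝ) (hx : 0 < x) (hxy : x < y) (hy : y ≤ 1)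
    (hr : r2f (xiF n p lam) x y ≠ 1) :
    (0 < deriv (fun u => hfun (xiF n p lam) u y (r2f (xiF n p lam) u y)) x ↔
        0 < (deriv (xiF n p lam) y - deriv (xiF n p lam) x) ^ 2 -
          deriv (deriv (xiF n p lam)) x * deriv (deriv (xiF n p lam)) y * (y - x) ^ 2) ∧
    (deriv (fun u => hfun (xiF n p lam) u y (r2f (xiF n p lam) u y)) x = 0 ↔
        (deriv (xiF n p lam) y - deriv (xiF n p lam) x) ^ 2 -
          deriv (deriv (xiF n p lam)) x * deriv (deriv (xiF n p lam)) y * (y - x) ^ 2 = 0) ∧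
    (deriv (fun u => hfun (xiF n p lam) u y (r2f (xiF n p lam) u y)) x < 0 ↔
        (deriv (xiF n p lam) y - deriv (xiF n p lam) x) ^ 2 -
          deriv (deriv (xiF n p lam)) x * deriv (deriv (xiF n p lam)) y * (y - x) ^ 2 < 0) :=
  hF_partial_x_sign_general n hn p hp2 lam hlam x y hx hxy hr
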